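/- If x, y, z are real numbers with 0 ≤ x+y ≤ π, 0 ≤ x+z ≤ π, and 0 ≤ y+z ≤ π, then (1/2)(Λ(x+y+z) − Λ(x) − Λ(y) − Λ(z)) ≤ 0. -/

import Mathlib

open Real Filter

noncomputable def Lob (x : ℝ) : ℝ := -∫ t in (0:ℝ)..x, Real.log |2 * Real.sin t|

noncomputable def v8 : ℝ := 8 * Lob (Real.pi / 4)

noncomputable def nu (a b c : ℝ) : ℝ :=
  (1/2) * (Lob ((a+b+c)/2) - Lob ((a+b-c)/2) - Lob ((a-b+c)/2) - Lob ((-a+b+c)/2))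

noncomputable def Ffun (Z t1 t2 t3 t4 t5 t6 : ℝ) : ℝ :=
  Lob (Z - (t1+t2+t3)/2) + Lob (Z - (t1+t5+t6)/2) + Lob (Z - (t2+t4+t6)/2) +
    Lob (Z - (t3+t4+t5)/2) + Lob ((t1+t2+t4+t5)/2 - Z) + Lob ((t1+t3+t4+t6)/2 - Z) +
    Lob ((t2+t3+t5+t6)/2 - Z) - Lob Z

noncomputable def Umax (t1 t2 t3 t4 t5 t6 : ℝ) : ℝ :=
  max (max ((t1+t2+t3)/2) ((t1+t5+t6)/2)) (max ((t2+t4+t6)/2) ((t3+t4+t5)/2))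

noncomputable def Vmin (t1 t2 t3 t4 t5 t6 : ℝ) : ℝ :=
  min (min ((t1+t2+t4+t5)/2) ((t1+t3+t4+t6)/2)) ((t2+t3+t5+t6)/2)

noncomputable def bigV (t1 t2 t3 t4 t5 t6 : ℝ) : ℝ :=
  sSup ((fun Z => Ffun Z t1 t2 t3 t4 t5 t6) ''
      Set.Icc (Umax t1 t2 t3 t4 t5 t6) (min (Vmin t1 t2 t3 t4 t5 t6) (2 * Real.pi))) +
    nu t1 t2 t3 + nu t1 t5 t6 + nu t2 t4 t6 + nu t3 t4 t5

/-!
For `a = x + y ∈ [0, π]` the function `z ↦ Λ(a + z) - Λ(z)` has derivative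
`log |sin z| - log |sin (a + z)|`, and `sin² (a + z) - sin² z = sin a · sin (a + 2z)`; so it
decreases on `[-a/2, (π - a)/2]` and increases on `[(π - a)/2, π - a/2]`. When `y ≤ x`, the
admissible range `z ∈ [-y, π - x]` lies inside `[-a/2, π - a/2]`, so the function is bounded by
its values at `-y` and `π - x`, which both equal `Λ(x) + Λ(y)` because `Λ` is odd and
`Λ(t + π) = Λ(t) + Λ(π)`.
-/

open MeasureTheory intervalIntegral Set

lemma intervalIntegrable_log_abs_two_mul_sin (a b : ℝ) :
    IntervalIntegrable (fun t => log |2 * sin t|) volume a b :=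
  (analyticOnNhd_const.mul analyticOnNhd_sin).meromorphicOn.intervalIntegrable_log_norm

lemma ae_sin_ne_zero : ∀ᵐ t : ℝ, sin t ≠ 0 := by
  have hzeros : {t : ℝ | sin t = 0}.Countable := by
    have hrange : {t : ℝ | sin t = 0} = range fun n : ℤ => (n : ℝ) * π := by
      ext; exact sin_eq_zero_iff
    exact hrange ▸ countable_range _
  exact hzeros.ae_notMem volume

lemma sin_add_sq_sub_sin_sq (a t : ℝ) :
    sin (a + t) ^ 2 - sin t ^ 2 = sin a * sin (a + 2 * t) := by
  simp only [sin_add, sin_two_mul, cos_two_mul]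
  linear_combination sin t ^ 2 * sin_sq_add_cos_sq a - sin a ^ 2 * sin_sq_add_cos_sq t

lemma Lob_zero : Lob 0 = 0 := by
  simp [Lob]

lemma Lob_sub_Lob (a b : ℝ) : Lob b - Lob a = -∫ t in a..b, log |2 * sin t| := by
  rw [Lob, Lob, ← integral_interval_sub_left (intervalIntegrable_log_abs_two_mul_sin 0 b)
    (intervalIntegrable_log_abs_two_mul_sin 0 a)]
  ring

lemma Lob_neg (x : ℝ) : Lob (-x) = -Lob x := by
  have h := integral_comp_neg (a := 0) (b := x) fun t => log |2 * sin t|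
  simp only [sin_neg, mul_neg, abs_neg, neg_zero] at h
  rw [Lob, Lob, h, integral_symm, neg_neg]

lemma Lob_add_pi (x : ℝ) : Lob (x + π) = Lob x + Lob π := by
  have hper : Function.Periodic (fun t => log |2 * sin t|) π := fun t => by
    simp only [sin_add_pi, mul_neg, abs_neg]
  have h := Lob_sub_Lob x (x + π)
  rw [hper.intervalIntegral_add_eq x 0, zero_add, ← Lob_sub_Lob, Lob_zero] at h
  linarith

lemma abs_sin_le_abs_sin_add {a t : ℝ} (ha : 0 ≤ sin a) (ht : 0 ≤ sin (a + 2 * t)) :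
    |sin t| ≤ |sin (a + t)| :=
  sq_le_sq.mp (sub_nonneg.mp (sin_add_sq_sub_sin_sq a t ▸ mul_nonneg ha ht))

lemma abs_sin_add_le_abs_sin {a t : ℝ} (ha : 0 ≤ sin a) (ht : sin (a + 2 * t) ≤ 0) :
    |sin (a + t)| ≤ |sin t| :=
  sq_le_sq.mp (sub_nonpos.mp (sin_add_sq_sub_sin_sq a t ▸ mul_nonpos_of_nonneg_of_nonpos ha ht))

lemma Lob_add_sub_Lob_sub (a z₁ z₂ : ℝ) :
    (Lob (a + z₁) - Lob z₁) - (Lob (a + z₂) - Lob z₂) =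
      ∫ t in z₁..z₂, (log |2 * sin (a + t)| - log |2 * sin t|) := by
  have hshift : IntervalIntegrable (fun t => log |2 * sin (a + t)|) volume z₁ z₂ := by
    simpa using (intervalIntegrable_log_abs_two_mul_sin (a + z₁) (a + z₂)).comp_add_left a
  rw [integral_sub hshift (intervalIntegrable_log_abs_two_mul_sin z₁ z₂),
    integral_comp_add_left fun t => log |2 * sin t|]
  linarith [Lob_sub_Lob (a + z₁) (a + z₂), Lob_sub_Lob z₁ z₂]

lemma antitoneOn_Lob_add_sub_Lob {a p q : ℝ} (h : ∀ t ∈ Icc p q, |sin t| ≤ |sin (a + t)|) :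
    AntitoneOn (fun z => Lob (a + z) - Lob z) (Icc p q) := by
  intro z₁ hz₁ z₂ hz₂ hz
  rw [← sub_nonneg, Lob_add_sub_Lob_sub]
  refine integral_nonneg_of_ae_restrict hz ?_
  -- the logarithmic singularities at the zeros of `sin` form a null set
  filter_upwards [ae_restrict_mem measurableSet_Icc, ae_restrict_of_ae ae_sin_ne_zero]
    with t ht hsin
  have hle := h t ⟨hz₁.1.trans ht.1, ht.2.trans hz₂.2⟩
  refine sub_nonneg.mpr (log_le_log (by positivity) ?_)
  rw [abs_mul, abs_mul]
  gcongr

lemma monotoneOn_Lob_add_sub_Lob {a p q : ℝ} (h : ∀ t ∈ Icc p q, |sin (a + t)| ≤ |sin t|) :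
    MonotoneOn (fun z => Lob (a + z) - Lob z) (Icc p q) := by
  have hanti : AntitoneOn (fun z => Lob (-a + z) - Lob z) (Icc (a + p) (a + q)) :=
    antitoneOn_Lob_add_sub_Lob fun s hs => by
      simpa using h (-a + s) ⟨by linarith [hs.1], by linarith [hs.2]⟩
  intro z₁ hz₁ z₂ hz₂ hz
  have := hanti ⟨by linarith [hz₁.1], by linarith [hz₁.2]⟩
    ⟨by linarith [hz₂.1], by linarith [hz₂.2]⟩ (by linarith : a + z₁ ≤ a + z₂)
  simp only [neg_add_cancel_left] at this
  linarith

lemma Lob_add_add_le {u v w : ℝ} (hvu : v ≤ u) (huv : 0 ≤ u + v) (huv' : u + v ≤ π)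
    (hvw : 0 ≤ v + w) (huw : u + w ≤ π) :
    Lob (u + v + w) ≤ Lob u + Lob v + Lob w := by
  set a := u + v with ha
  set m := (π - a) / 2 with hm
  have hsin_a : 0 ≤ sin a := sin_nonneg_of_nonneg_of_le_pi huv huv'
  have hleft : Lob (a + -v) - Lob (-v) = Lob u + Lob v := by
    rw [Lob_neg, show a + -v = u by ring]; ring
  have hright : Lob (a + (π - u)) - Lob (π - u) = Lob u + Lob v := by
    rw [show a + (π - u) = v + π by ring, show π - u = -u + π by ring, Lob_add_pi, Lob_add_pi,
      Lob_neg]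
    ring
  suffices Lob (a + w) - Lob w ≤ Lob u + Lob v by linarith
  rcases le_total w m with hwm | hmw
  · have hanti : AntitoneOn (fun z => Lob (a + z) - Lob z) (Icc (-v) m) :=
      antitoneOn_Lob_add_sub_Lob fun t ht => abs_sin_le_abs_sin_add hsin_a
        (sin_nonneg_of_nonneg_of_le_pi (by linarith [ht.1]) (by linarith [ht.2]))
    rw [← hleft]
    exact hanti ⟨le_rfl, by linarith⟩ ⟨by linarith, hwm⟩ (by linarith)
  · have hmono : MonotoneOn (fun z => Lob (a + z) - Lob z) (Icc m (π - u)) :=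
      monotoneOn_Lob_add_sub_Lob fun t ht => abs_sin_add_le_abs_sin hsin_a <| by
        have := sin_nonneg_of_nonneg_of_le_pi (x := a + 2 * t - π) (by linarith [ht.1])
          (by linarith [ht.2])
        rwa [sin_sub_pi, neg_nonneg] at this
    rw [← hright]
    exact hmono ⟨hmw, by linarith⟩ ⟨by linarith, le_rfl⟩ (by linarith)

/-- (1/2)(Λ(x+y+z) − Λ(x) − Λ(y) − Λ(z)) ≤ 0 under the pairwise constraints. -/
theorem theta_nonpos (x y z : ℝ)
    (hxy : 0 ≤ x + y) (hxy' : x + y ≤ Real.pi)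
    (hxz : 0 ≤ x + z) (hxz' : x + z ≤ Real.pi)
    (hyz : 0 ≤ y + z) (hyz' : y + z ≤ Real.pi) :
    (1/2) * (Lob (x + y + z) - Lob x - Lob y - Lob z) ≤ 0 := by
  rcases le_total y x with hyx | hxy''
  · linarith [Lob_add_add_le hyx hxy hxy' hyz hxz']
  · have h := Lob_add_add_le hxy'' (by linarith) (by linarith) hxz hyz'
    rw [add_comm y x] at h
    linarith
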